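/- arXiv:1809.09706 — 2 statements merged into one kernel-verified Lean document; each statement's English description precedes it below -/
import Mathlib

section
/- Let B be a nonzero r-vector in the exterior algebra of ℝ^n satisfying the Plücker relations, and suppose the coefficient B_J = ⟨B, e_j ∧ e_K⟩ is nonzero, where e_J = e_j ∧ e_K for a coordinate vector e_j and coordinate (r−1)-blade e_K. Then B = B_J^{-1} (e_K · B) ∧ (e_j · B), where e_j · B is the (r−1)-vector obtained by contracting B with e_j and e_K · B is a vector. -/
noncomputable section

open CliffordAlgebra

/-- The Euclidean quadratic form on `ℝⁿ`. -/
def Qe (n : ℕ) : QuadraticForm ℝ (EuclideanSpace ℝ (Fin n)) :=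
  LinearMap.BilinMap.toQuadraticMap (innerₗ (EuclideanSpace ℝ (Fin n)))

/-- The geometric (Clifford) algebra `𝒢ₙ` of Euclidean `ℝⁿ`. -/
abbrev GA (n : ℕ) := CliffordAlgebra (Qe n)

/-- The canonical linear equivalence with the exterior algebra of `ℝⁿ`,
identifying multivectors with elements of the exterior algebra. -/
def toExt {n : ℕ} : GA n ≃ₗ[ℝ] ExteriorAlgebra ℝ (EuclideanSpace ℝ (Fin n)) :=
  CliffordAlgebra.equivExterior (Qe n)

/-- The outer (wedge) product of multivectors, transported from the exterior algebra. -/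
def wedge {n : ℕ} (x y : GA n) : GA n := toExt.symm (toExt x * toExt y)

/-- The submodule of homogeneous multivectors of grade `r` (`r`-vectors). -/
def gradeSub (n r : ℕ) : Submodule ℝ (GA n) :=
  (⋀[ℝ]^r (EuclideanSpace ℝ (Fin n))).comap (toExt (n := n)).toLinearMap

/-- The projection onto the grade-`r` part, `⟨·⟩_r`. -/
def gproj (n r : ℕ) : GA n →ₗ[ℝ] GA n :=
  (toExt (n := n)).symm.toLinearMap ∘ₗ
    (GradedAlgebra.proj (fun i : ℕ => ⋀[ℝ]^i (EuclideanSpace ℝ (Fin n))) r) ∘ₗ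
    (toExt (n := n)).toLinearMap

/-- The scalar (grade-0) part of a multivector, as a real number. -/
def scalarPart {n : ℕ} (x : GA n) : ℝ := ExteriorAlgebra.algebraMapInv (toExt x)

/-- The `i`-th orthonormal basis vector of `ℝⁿ`, as a multivector. -/
def bv (n : ℕ) (i : Fin n) : GA n := ι (Qe n) (EuclideanSpace.single i 1)

/-- The coordinate basis blade `e_J` for an index set `J`, the product of the
basis vectors indexed by `J` in increasing order. -/
def eB (n : ℕ) (J : Finset (Fin n)) : GA n :=
  ((J.sort (· ≤ ·)).map (bv n)).prod

/-- The outer product `v 0 ∧ v 1 ∧ ⋯` of a family of vectors. -/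
def bladeOf {n r : ℕ} (v : Fin r → EuclideanSpace ℝ (Fin n)) : GA n :=
  ((List.ofFn fun i => ι (Qe n) (v i)).foldr wedge 1)

/-- `B` is an `r`-blade: an outer product of `r` vectors. -/
def IsBlade (n r : ℕ) (B : GA n) : Prop :=
  ∃ v : Fin r → EuclideanSpace ℝ (Fin n), B = bladeOf v

/-- The contraction (interior product) `A · B`, extracting the grade-`g` part of the
geometric product `A† B`. -/
def contr {n : ℕ} (g : ℕ) (A B : GA n) : GA n := gproj n g (reverse A * B)


/-!
Contract the Plücker relation for `A = e_K` with `e_j`. With `w = e_K · B`, the relation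
`w ∧ B = 0` and the antiderivation rule for contraction give
`0 = e_j ⌋ (w ∧ B) = ⟨e_j, w⟩ B - w ∧ (e_j ⌋ B)`. Here `⟨e_j, w⟩ = B_J` because `j ∉ K` makes
`e_j ∧ e_K = e_j e_K`, and `e_j ⌋ B = e_j · B` because `B` is homogeneous, so the identity
`B_J B = w ∧ (e_j · B)` is the claim.
-/

namespace ExteriorAlgebra

variable {R M : Type*} [CommRing R] [AddCommGroup M] [Module R M]

local notation "𝒜" => fun i : ℕ => ⋀[R]^i M

theorem exteriorPower_one : ⋀[R]^1 M = LinearMap.range (ι R) :=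
  pow_one _

theorem ι_mem_exteriorPower_one (v : M) : ι R v ∈ ⋀[R]^1 M :=
  exteriorPower_one.ge (LinearMap.mem_range_self _ v)

theorem list_prod_map_ι_mem_exteriorPower (l : List M) :
    (l.map (ι R)).prod ∈ ⋀[R]^l.length M := by
  simpa using SetLike.list_prod_map_mem_graded (A := 𝒜) l (fun _ => 1)
    (ι R) fun v _ => ι_mem_exteriorPower_one v

theorem algebraMapInv_eq_zero_of_mem_exteriorPower {k : ℕ} (hk : k ≠ 0) {x : ExteriorAlgebra R M}
    (hx : x ∈ ⋀[R]^k M) : algebraMapInv x = 0 := by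
  induction hx using Submodule.pow_induction_on_left' with
  | algebraMap => contradiction
  | add x y i _ _ hx hy => rw [map_add, hx hk, hy hk, add_zero]
  | mem_mul m hm i x _ _ =>
    obtain ⟨v, rfl⟩ := hm
    rw [map_mul]
    simp [algebraMapInv]

variable (d : Module.Dual R M)

theorem contractLeft_eq_zero_of_mem_exteriorPower_zero {x : ExteriorAlgebra R M}
    (hx : x ∈ ⋀[R]^0 M) : contractLeft d x = 0 := by
  rw [exteriorPower, pow_zero, Submodule.mem_one] at hx
  obtain ⟨r, rfl⟩ := hx
  exact contractLeft_algebraMap _ _ _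

theorem contractLeft_mem_exteriorPower {k : ℕ} {x : ExteriorAlgebra R M} (hx : x ∈ ⋀[R]^k M) :
    contractLeft d x ∈ ⋀[R]^(k - 1) M := by
  induction hx using Submodule.pow_induction_on_left' with
  | algebraMap r => rw [contractLeft_algebraMap]; exact zero_mem _
  | add x y i _ _ hx hy => rw [map_add]; exact add_mem hx hy
  | mem_mul m hm i x hx ih =>
    obtain ⟨v, rfl⟩ := hm
    rw [contractLeft_ι_mul]
    refine sub_mem (Submodule.smul_mem _ _ hx) ?_
    cases i with
    | zero => rw [contractLeft_eq_zero_of_mem_exteriorPower_zero d hx, mul_zero]; exact zero_mem _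
    | succ i => simpa [add_comm] using SetLike.mul_mem_graded (ι_mem_exteriorPower_one v) ih

theorem contractLeft_list_prod_map_ι {l : List M} (hl : ∀ v ∈ l, d v = 0) :
    contractLeft d (l.map (ι R)).prod = 0 := by
  induction l with
  | nil => simp
  | cons v l ih =>
    rw [List.map_cons, List.prod_cons, contractLeft_ι_mul, hl v List.mem_cons_self,
      ih fun u hu => hl u (List.mem_cons_of_mem _ hu), mul_zero, sub_zero, zero_smul]

theorem algebraMapInv_contractLeft (x : ExteriorAlgebra R M) :
    algebraMapInv (contractLeft d x) =
      algebraMapInv (contractLeft d (GradedAlgebra.proj 𝒜 1 x)) := by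
  induction x using DirectSum.Decomposition.inductionOn 𝒜 with
  | zero => simp
  | add x y hx hy => rw [map_add, map_add, hx, hy, map_add, map_add, map_add]
  | @homogeneous i x =>
    obtain ⟨x, hx⟩ := x
    rw [GradedAlgebra.proj_apply]
    dsimp only
    rcases eq_or_ne i 1 with rfl | hi
    · rw [DirectSum.decompose_of_mem_same 𝒜 hx]
    · rw [DirectSum.decompose_of_mem_ne 𝒜 hx hi, map_zero, map_zero]
      rcases Nat.lt_or_gt_of_ne hi with hi | hi
      · rw [Nat.lt_one_iff.mp hi] at hx
        rw [contractLeft_eq_zero_of_mem_exteriorPower_zero d hx, map_zero]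
      · exact algebraMapInv_eq_zero_of_mem_exteriorPower (by omega)
          (contractLeft_mem_exteriorPower d hx)

theorem ι_mul_contractLeft_of_ι_mul_eq_zero {w : M} {x : ExteriorAlgebra R M}
    (h : ι R w * x = 0) : ι R w * contractLeft d x = d w • x := by
  have := contractLeft_ι_mul (Q := 0) d w x
  rw [h, map_zero] at this
  exact (sub_eq_zero.mp this.symm).symm

end ExteriorAlgebra

section Euclidean

variable {n : ℕ}

local notation "𝒜" => fun i : ℕ => ⋀[ℝ]^i (EuclideanSpace ℝ (Fin n))

theorem associated_neg_Qe :
    QuadraticMap.associated (-Qe n) = -innerₗ (EuclideanSpace ℝ (Fin n)) := by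
  rw [map_neg, Qe, QuadraticMap.associated_left_inverse ℝ fun x y => real_inner_comm y x]

theorem toExt_ι (m : EuclideanSpace ℝ (Fin n)) : toExt (ι (Qe n) m) = ExteriorAlgebra.ι ℝ m :=
  changeForm_ι (h := changeForm.associated_neg_proof) m

theorem toExt_ι_mul (m : EuclideanSpace ℝ (Fin n)) (x : GA n) :
    toExt (ι (Qe n) m * x) =
      ExteriorAlgebra.ι ℝ m * toExt x + contractLeft (innerₗ _ m) (toExt x) := by
  have h : toExt (ι (Qe n) m * x) = ExteriorAlgebra.ι ℝ m * toExt x -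
      contractLeft (QuadraticMap.associated (-Qe n) m) (toExt x) :=
    changeForm_ι_mul (h := changeForm.associated_neg_proof) _ _
  rw [h, associated_neg_Qe, LinearMap.neg_apply, map_neg, LinearMap.neg_apply, sub_neg_eq_add]

theorem toExt_wedge (x y : GA n) : toExt (wedge x y) = toExt x * toExt y := by
  simp [wedge]

theorem toExt_gproj (g : ℕ) (x : GA n) :
    toExt (gproj n g x) = GradedAlgebra.proj 𝒜 g (toExt x) := by
  simp [gproj]

theorem toExt_list_prod_map_ι {l : List (EuclideanSpace ℝ (Fin n))}
    (hl : l.Pairwise fun u v => inner ℝ u v = 0) :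
    toExt (l.map (ι (Qe n))).prod = (l.map (ExteriorAlgebra.ι ℝ)).prod := by
  induction l with
  | nil => exact changeForm_one (h := changeForm.associated_neg_proof)
  | cons v l ih =>
    rw [List.pairwise_cons] at hl
    rw [List.map_cons, List.prod_cons, toExt_ι_mul, ih hl.2,
      ExteriorAlgebra.contractLeft_list_prod_map_ι _ hl.1, add_zero, List.map_cons, List.prod_cons]

theorem toExt_eB (K : Finset (Fin n)) :
    toExt (eB n K) = (((K.sort (· ≤ ·)).map fun k => EuclideanSpace.single k (1 : ℝ)).map
      (ExteriorAlgebra.ι ℝ)).prod := by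
  rw [eB, ← toExt_list_prod_map_ι, List.map_map]
  · rfl
  · refine List.Pairwise.map _ (fun i k hik => ?_) (K.sort_nodup _)
    simp [EuclideanSpace.inner_single_left, hik.symm]

theorem eB_mem_gradeSub (K : Finset (Fin n)) : eB n K ∈ gradeSub n K.card := by
  show toExt (eB n K) ∈ ⋀[ℝ]^K.card (EuclideanSpace ℝ (Fin n))
  simpa [toExt_eB] using ExteriorAlgebra.list_prod_map_ι_mem_exteriorPower
    (R := ℝ) ((K.sort (· ≤ ·)).map fun k => EuclideanSpace.single k (1 : ℝ))

theorem wedge_bv_eB {j : Fin n} {K : Finset (Fin n)} (hjK : j ∉ K) :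
    wedge (bv n j) (eB n K) = bv n j * eB n K := by
  apply toExt.injective
  rw [toExt_wedge, bv, toExt_ι, toExt_ι_mul, toExt_eB,
    ExteriorAlgebra.contractLeft_list_prod_map_ι, add_zero]
  simp only [List.mem_map, Finset.mem_sort]
  rintro _ ⟨k, hk, rfl⟩
  simp [EuclideanSpace.inner_single_left, (ne_of_mem_of_not_mem hk hjK).symm]

theorem toExt_gproj_sub_one_ι_mul (m : EuclideanSpace ℝ (Fin n)) {r : ℕ} {B : GA n}
    (hB : B ∈ gradeSub n r) :
    toExt (gproj n (r - 1) (ι (Qe n) m * B)) = contractLeft (innerₗ _ m) (toExt B) := by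
  have hB : toExt B ∈ ⋀[ℝ]^r (EuclideanSpace ℝ (Fin n)) := hB
  rw [toExt_gproj, toExt_ι_mul, map_add, GradedAlgebra.proj_apply, GradedAlgebra.proj_apply,
    DirectSum.decompose_of_mem_ne 𝒜 (SetLike.mul_mem_graded
      (ExteriorAlgebra.ι_mem_exteriorPower_one m) hB) (by omega),
    DirectSum.decompose_of_mem_same 𝒜 (ExteriorAlgebra.contractLeft_mem_exteriorPower _ hB),
    zero_add]

theorem exists_toExt_gproj_one_eq_ι (x : GA n) :
    ∃ w, toExt (gproj n 1 x) = ExteriorAlgebra.ι ℝ w := by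
  obtain ⟨w, hw⟩ := ExteriorAlgebra.exteriorPower_one.le (DirectSum.decompose 𝒜 (toExt x) 1).prop
  exact ⟨w, by rw [toExt_gproj, GradedAlgebra.proj_apply, ← hw]⟩

theorem scalarPart_ι_mul (m : EuclideanSpace ℝ (Fin n)) {w : EuclideanSpace ℝ (Fin n)} {x : GA n}
    (hw : toExt (gproj n 1 x) = ExteriorAlgebra.ι ℝ w) :
    scalarPart (ι (Qe n) m * x) = inner ℝ m w := by
  rw [scalarPart, toExt_ι_mul, map_add, map_mul, ExteriorAlgebra.algebraMapInv_contractLeft,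
    ← toExt_gproj, hw, contractLeft_ι, ExteriorAlgebra.algebraMap_leftInverse]
  simp [ExteriorAlgebra.algebraMapInv]

end Euclidean

theorem stmt4_general (n r : ℕ) (B : GA n) (hB : B ∈ gradeSub n r)
    (hPl : ∀ A ∈ gradeSub n (r - 1), wedge (gproj n 1 (A * B)) B = 0)
    (j : Fin n) (K : Finset (Fin n)) (hK : K.card = r - 1) (hjK : j ∉ K)
    (hBJ : scalarPart (wedge (bv n j) (eB n K) * B) ≠ 0) :
    B = (scalarPart (wedge (bv n j) (eB n K) * B))⁻¹ •
        wedge (gproj n 1 (eB n K * B)) (gproj n (r - 1) (bv n j * B)) := by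
  obtain ⟨w, hw⟩ := exists_toExt_gproj_one_eq_ι (eB n K * B)
  have hwB : ExteriorAlgebra.ι ℝ w * toExt B = 0 := by
    have h := congrArg toExt (hPl (eB n K) (hK ▸ eB_mem_gradeSub K))
    rwa [toExt_wedge, map_zero, hw] at h
  have hBJ_eq :
      scalarPart (wedge (bv n j) (eB n K) * B) = inner ℝ (EuclideanSpace.single j 1) w := by
    rw [wedge_bv_eB hjK, mul_assoc, bv, scalarPart_ι_mul _ hw]
  rw [hBJ_eq] at hBJ ⊢
  apply toExt.injective
  rw [map_smul, toExt_wedge, hw, bv, toExt_gproj_sub_one_ι_mul _ hB,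
    ExteriorAlgebra.ι_mul_contractLeft_of_ι_mul_eq_zero _ hwB, innerₗ_apply_apply, smul_smul,
    inv_mul_cancel₀ hBJ, one_smul]

/-- If the nonzero `r`-vector `B` satisfies the Plücker relations and the
coefficient `B_J = ⟨(e_j ∧ e_K) B⟩₀` of `B` on `e_J = e_j ∧ e_K` is nonzero (`e_j` a
coordinate vector, `e_K` a coordinate `(r-1)`-blade), then
`B = B_J⁻¹ (e_K · B) ∧ (e_j · B)`, where `e_K·B = ⟨e_K B⟩₁` is a vector and
`e_j·B = ⟨e_j B⟩_{r-1}` an `(r-1)`-vector. -/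
theorem stmt4 (n r : ℕ) (B : GA n) (hB : B ∈ gradeSub n r) (hB0 : B ≠ 0)
    (hPl : ∀ A ∈ gradeSub n (r - 1), wedge (gproj n 1 (A * B)) B = 0)
    (j : Fin n) (K : Finset (Fin n)) (hK : K.card = r - 1) (hjK : j ∉ K)
    (hBJ : scalarPart (wedge (bv n j) (eB n K) * B) ≠ 0) :
    B = (scalarPart (wedge (bv n j) (eB n K) * B))⁻¹ •
        wedge (gproj n 1 (eB n K * B)) (gproj n (r - 1) (bv n j * B)) :=
  stmt4_general n r B hB hPl j K hK hjK hBJ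
end
end

section
/- Let B be an r-vector and v a vector in the geometric algebra G_n with B² = B·B (B² scalar). Then ⟨BvB⟩_{3,5,…} = 2⟨(B∧v)B⟩_{3,5,…}; in particular, if BvB is not a vector then B ∧ v ≠ 0, i.e. v ∧ B ≠ 0. -/
/-!
For a vector `v` and any multivector `x`, the exterior product is `v ∧ x = v x - v ⌋ x`, while
moving `v` across `x` gives `v x = x̂ v + 2 v ⌋ x` (`x̂` the grade involution). Together they yield
`2 (x ∧ v) = x v + v x̂`. For an `r`-vector `B` we have `B̂ = (-1)^r B`, so
`2 (B ∧ v) B = B v B + (-1)^r v B²`, and the last term is a multiple of `v` because `B²` is a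
scalar. Thus `B v B` and `2 (B ∧ v) B` differ by a vector, so their parts of grade `≠ 1` agree;
and if `B ∧ v = 0` then `B v B` is a vector. Finally `v ∧ B = (-1)^r B ∧ v`.
-/

noncomputable section

open CliffordAlgebra

namespace CliffordAlgebra

variable {R M : Type*} [CommRing R] [AddCommGroup M] [Module R M] {Q : QuadraticForm R M}

theorem involute_contractLeft (d : Module.Dual R M) (x : CliffordAlgebra Q) :
    involute (contractLeft d x) = -contractLeft d (involute x) := by
  induction x using CliffordAlgebra.left_induction with
  | algebraMap r => simp [contractLeft_algebraMap]
  | add x y hx hy => simp only [map_add, hx, hy, neg_add]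
  | ι_mul x m hx =>
    simp only [contractLeft_ι_mul, map_sub, map_smul, map_mul, involute_ι, hx, neg_mul, mul_neg,
      map_neg, neg_neg, neg_sub]

theorem changeForm_involute {Q' : QuadraticForm R M} {B : LinearMap.BilinForm R M}
    (h : B.toQuadraticMap = Q' - Q) (x : CliffordAlgebra Q) :
    changeForm h (involute x) = involute (changeForm h x) := by
  induction x using CliffordAlgebra.left_induction with
  | algebraMap r => simp
  | add x y hx hy => simp only [map_add, hx, hy]
  | ι_mul x m hx =>
    simp only [map_mul, involute_ι, neg_mul, map_neg, changeForm_ι_mul, map_sub, hx,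
      involute_contractLeft]
    abel

theorem involute_eq_of_mem_range_ι_pow {i : ℕ} {x : CliffordAlgebra Q}
    (hx : x ∈ LinearMap.range (ι Q) ^ i) : involute x = (-1 : R) ^ i • x := by
  induction hx using Submodule.pow_induction_on_left' with
  | algebraMap r => simp
  | add x y i _ _ hx hy => rw [map_add, hx, hy, smul_add]
  | mem_mul m hm i x _ hx =>
    obtain ⟨m, rfl⟩ := hm
    rw [map_mul, involute_ι, hx, neg_mul, mul_smul_comm, pow_succ', mul_smul, neg_one_smul]

theorem ι_mul_eq_involute_mul_add_contractLeft (v : M) (x : CliffordAlgebra Q) :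
    ι Q v * x = involute x * ι Q v + contractLeft (Q.polarBilin v) x := by
  induction x using CliffordAlgebra.left_induction with
  | algebraMap r => simp [Algebra.commutes]
  | add x y hx hy => rw [mul_add, hx, hy, map_add, map_add, add_mul]; abel
  | ι_mul x m hx =>
    have hswap : ι Q v * ι Q m = algebraMap R _ (QuadraticMap.polar Q v m) - ι Q m * ι Q v := by
      rw [eq_sub_iff_add_eq, ι_mul_ι_add_swap]
    rw [← mul_assoc, hswap, sub_mul, mul_assoc, hx, map_mul, involute_ι, contractLeft_ι_mul,
      ← Algebra.smul_def, QuadraticMap.polarBilin_apply_apply]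
    simp only [neg_mul, mul_add, mul_assoc]
    abel

theorem _root_.ExteriorAlgebra.ι_mul_eq_involute_mul (v : M) (x : ExteriorAlgebra R M) :
    ExteriorAlgebra.ι R v * x = involute x * ExteriorAlgebra.ι R v := by
  have hpolar : (0 : QuadraticForm R M).polarBilin = 0 := by ext; simp [QuadraticMap.polar]
  simpa [hpolar] using ι_mul_eq_involute_mul_add_contractLeft (Q := 0) v x

variable [Invertible (2 : R)]

theorem equivExterior_involute (x : CliffordAlgebra Q) :
    equivExterior Q (involute x) = involute (equivExterior Q x) :=
  changeForm_involute changeForm.associated_neg_proof x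

theorem equivExterior_ι (v : M) : equivExterior Q (ι Q v) = ExteriorAlgebra.ι R v :=
  changeForm_ι changeForm.associated_neg_proof v

theorem equivExterior_ι_mul_sub_contractLeft (v : M) (x : CliffordAlgebra Q) :
    equivExterior Q (ι Q v * x - contractLeft (QuadraticMap.associated Q v) x) =
      ExteriorAlgebra.ι R v * equivExterior Q x := by
  simp only [equivExterior, changeFormEquiv_apply, map_sub, changeForm_ι_mul,
    changeForm_contractLeft, map_neg, LinearMap.neg_apply, sub_neg_eq_add, add_sub_cancel_right]

theorem two_smul_symm_equivExterior_ι_mul (v : M) (x : CliffordAlgebra Q) :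
    (2 : R) • (equivExterior Q).symm (ExteriorAlgebra.ι R v * equivExterior Q x) =
      ι Q v * x + involute x * ι Q v := by
  have hpolar : Q.polarBilin v = (2 : R) • QuadraticMap.associated Q v := by
    rw [← QuadraticMap.two_nsmul_associated R, LinearMap.smul_apply, two_nsmul, two_smul]
  rw [← equivExterior_ι_mul_sub_contractLeft, LinearEquiv.symm_apply_apply,
    ι_mul_eq_involute_mul_add_contractLeft v x, hpolar, map_smul, LinearMap.smul_apply]
  module

end CliffordAlgebra

section GeometricAlgebra

variable {n : ℕ}

theorem two_smul_wedge_ι_left (v : EuclideanSpace ℝ (Fin n)) (x : GA n) :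
    (2 : ℝ) • wedge (ι (Qe n) v) x = ι (Qe n) v * x + involute x * ι (Qe n) v := by
  rw [wedge, toExt, equivExterior_ι, two_smul_symm_equivExterior_ι_mul]

theorem wedge_ι_right (x : GA n) (v : EuclideanSpace ℝ (Fin n)) :
    wedge x (ι (Qe n) v) = wedge (ι (Qe n) v) (involute x) := by
  rw [wedge, wedge, toExt, equivExterior_involute, equivExterior_ι,
    ExteriorAlgebra.ι_mul_eq_involute_mul, involute_involute]

theorem two_smul_wedge_ι_right (x : GA n) (v : EuclideanSpace ℝ (Fin n)) :
    (2 : ℝ) • wedge x (ι (Qe n) v) = x * ι (Qe n) v + ι (Qe n) v * involute x := by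
  rw [wedge_ι_right, two_smul_wedge_ι_left, involute_involute, add_comm]

theorem wedge_smul_right (x y : GA n) (c : ℝ) : wedge x (c • y) = c • wedge x y := by
  rw [wedge, wedge, map_smul, mul_smul_comm, map_smul]

theorem involute_eq_of_mem_gradeSub {r : ℕ} {x : GA n} (hx : x ∈ gradeSub n r) :
    involute x = (-1 : ℝ) ^ r • x :=
  toExt.injective <| by
    rw [toExt, equivExterior_involute, map_smul]
    exact involute_eq_of_mem_range_ι_pow hx

theorem ι_mem_gradeSub_one (v : EuclideanSpace ℝ (Fin n)) : ι (Qe n) v ∈ gradeSub n 1 := by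
  rw [gradeSub, Submodule.mem_comap, LinearEquiv.coe_coe, toExt, equivExterior_ι]
  change _ ∈ LinearMap.range (ExteriorAlgebra.ι ℝ) ^ 1
  rw [pow_one]
  exact LinearMap.mem_range_self _ v

theorem gproj_eq_self_of_mem {r : ℕ} {x : GA n} (hx : x ∈ gradeSub n r) : gproj n r x = x := by
  rw [gproj, LinearMap.comp_apply, LinearMap.comp_apply, LinearEquiv.coe_coe,
    GradedAlgebra.proj_apply, DirectSum.decompose_of_mem_same (fun i => ⋀[ℝ]^i _) hx,
    LinearEquiv.coe_coe, LinearEquiv.symm_apply_apply]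

end GeometricAlgebra

/-- Let `B` be an `r`-vector with `B² = B·B` scalar, and `v` a vector.
Then `⟨B v B⟩_{3,5,…} = 2 ⟨(B ∧ v) B⟩_{3,5,…}` (parts of grade ≥ 3, i.e. everything except
the grade-1 part); in particular, if `B v B` is not a vector then `B ∧ v ≠ 0`,
i.e. `v ∧ B ≠ 0`. -/
theorem stmt17 (n r : ℕ) (B : GA n) (hB : B ∈ gradeSub n r)
    (hsc : B * B = algebraMap ℝ (GA n) (scalarPart (B * B)))
    (v : EuclideanSpace ℝ (Fin n)) :
    (B * ι (Qe n) v * B - gproj n 1 (B * ι (Qe n) v * B) =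
      (2 : ℝ) • (wedge B (ι (Qe n) v) * B - gproj n 1 (wedge B (ι (Qe n) v) * B))) ∧
    (B * ι (Qe n) v * B ∉ gradeSub n 1 →
      wedge B (ι (Qe n) v) ≠ 0 ∧ wedge (ι (Qe n) v) B ≠ 0) := by
  have hinv : involute B = (-1 : ℝ) ^ r • B := involute_eq_of_mem_gradeSub hB
  obtain ⟨c, hc⟩ : ∃ c : ℝ, ι (Qe n) v * (involute B * B) = c • ι (Qe n) v := by
    refine ⟨(-1 : ℝ) ^ r * scalarPart (B * B), ?_⟩
    conv_lhs => rw [hinv, smul_mul_assoc, hsc]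
    rw [mul_smul_comm, ← Algebra.commutes, ← Algebra.smul_def, smul_smul]
  have hvec : c • ι (Qe n) v ∈ gradeSub n 1 := Submodule.smul_mem _ c (ι_mem_gradeSub_one v)
  have hBvB : B * ι (Qe n) v * B = (2 : ℝ) • (wedge B (ι (Qe n) v) * B) - c • ι (Qe n) v := by
    rw [← smul_mul_assoc, two_smul_wedge_ι_right, add_mul, mul_assoc (ι (Qe n) v), hc,
      add_sub_cancel_right]
  refine ⟨?_, fun hnot => ?_⟩
  · rw [hBvB, map_sub, map_smul, gproj_eq_self_of_mem hvec]
    module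
  · have hwedge : wedge B (ι (Qe n) v) ≠ 0 := fun h0 =>
      hnot (by simpa [hBvB, h0] using neg_mem hvec)
    refine ⟨hwedge, fun h0 => hwedge ?_⟩
    rw [wedge_ι_right, hinv, wedge_smul_right, h0, smul_zero]
end
end
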